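/- In the field of rational functions ℚ(v), set z = v/(1 + v + v²). For n ≥ 1 let A_n be the n × n tridiagonal matrix with diagonal entries 1 − z, entries −z on the sub- and superdiagonal, and 0 elsewhere, and let D_n = det A_n (with D_0 = 1). Then for every n ≥ 0, D_n = (1 − v^{2n+2}) / ((1 − v²)(1 + v + v²)^n). -/
import Mathlib


noncomputable section

def motzkinT (z : RatFunc ℚ) (n : ℕ) : Matrix (Fin n) (Fin n) (RatFunc ℚ) :=
  Matrix.of fun (i j : Fin n) =>
    if (i : ℕ) = (j : ℕ) then 1 - z
    else if (i : ℕ) + 1 = (j : ℕ) ∨ (j : ℕ) + 1 = (i : ℕ) then -z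
    else 0

lemma motzkinT_entry (z : RatFunc ℚ) {k m : ℕ} (i j : Fin k) (i' j' : Fin m)
    (hi : (i:ℕ)=(i':ℕ)) (hj : (j:ℕ)=(j':ℕ)) : motzkinT z k i j = motzkinT z m i' j' := by
  simp only [motzkinT, Matrix.of_apply, hi, hj]

lemma motzkinT_rec (z : RatFunc ℚ) (n : ℕ) :
    (motzkinT z (n+2)).det = (1-z) * (motzkinT z (n+1)).det - z^2 * (motzkinT z n).det := by
  rw [Matrix.det_succ_row _ (Fin.last (n+1))]
  rw [Fin.sum_univ_castSucc, Fin.sum_univ_castSucc]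
  have hzero : ∀ j : Fin n,
      motzkinT z (n+2) (Fin.last (n+1)) (Fin.castSucc (Fin.castSucc j)) = 0 := by
    intro j
    simp only [motzkinT, Matrix.of_apply, Fin.val_last, Fin.coe_castSucc]
    have hj := j.isLt
    rw [if_neg (by omega), if_neg (by omega)]
  simp only [hzero, mul_zero, zero_mul, Finset.sum_const_zero, zero_add]
  -- the two remaining minors
  have hsub2 : (motzkinT z (n + 2)).submatrix (Fin.last (n+1)).succAbove
      (Fin.last (n+1)).succAbove = motzkinT z (n+1) := by
    ext i j
    rw [Fin.succAbove_last]
    exact motzkinT_entry z _ _ i j rfl rfl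
  -- minor 1 determinant
  have hM1 : ((motzkinT z (n + 2)).submatrix (Fin.last (n+1)).succAbove
      (Fin.last n).castSucc.succAbove).det = -z * (motzkinT z n).det := by
    rw [Matrix.det_succ_column _ (Fin.last n)]
    rw [Fin.sum_univ_castSucc]
    have hz2 : ∀ i : Fin n,
        (motzkinT z (n + 2)).submatrix (Fin.last (n+1)).succAbove
          (Fin.last n).castSucc.succAbove (Fin.castSucc i) (Fin.last n) = 0 := by
      intro i
      simp only [Matrix.submatrix_apply, Fin.succAbove_last, motzkinT, Matrix.of_apply]
      have : (((Fin.last n).castSucc.succAbove (Fin.last n)) : ℕ) = n + 1 := by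
        rw [Fin.succAbove_of_le_castSucc _ _ (le_refl _)]
        simp
      have hi := i.isLt
      rw [if_neg (by simp [this]; omega), if_neg (by simp [this]; omega)]
    simp only [hz2, mul_zero, zero_mul, Finset.sum_const_zero, zero_add]
    have hentry : (motzkinT z (n + 2)).submatrix (Fin.last (n+1)).succAbove
        (Fin.last n).castSucc.succAbove (Fin.last n) (Fin.last n) = -z := by
      simp only [Matrix.submatrix_apply, Fin.succAbove_last, motzkinT, Matrix.of_apply]
      have : (((Fin.last n).castSucc.succAbove (Fin.last n)) : ℕ) = n + 1 := by
        rw [Fin.succAbove_of_le_castSucc _ _ (le_refl _)]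
        simp
      rw [if_neg (by simp [this]), if_pos (by simp [this])]
    rw [hentry]
    have hsub3 : ((motzkinT z (n + 2)).submatrix (Fin.last (n+1)).succAbove
        (Fin.last n).castSucc.succAbove).submatrix (Fin.last n).succAbove
        (Fin.last n).succAbove = motzkinT z n := by
      ext i j
      simp only [Matrix.submatrix_apply, Fin.succAbove_last]
      refine motzkinT_entry z _ _ i j (by simp) ?_
      rw [Fin.succAbove_of_castSucc_lt]
      · simp
      · simp [Fin.castSucc_lt_castSucc_iff, Fin.castSucc_lt_last]
    rw [Matrix.submatrix_submatrix] at hsub3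
    rw [show ((motzkinT z (n + 2)).submatrix (Fin.last (n+1)).succAbove
        (Fin.last n).castSucc.succAbove).submatrix (Fin.last n).succAbove
        (Fin.last n).succAbove = motzkinT z n from hsub3]
    simp only [Fin.val_last, ← two_mul, pow_mul, neg_one_sq, one_pow, one_mul]
  rw [hsub2, hM1]
  have e1 : motzkinT z (n + 2) (Fin.last (n+1)) (Fin.last n).castSucc = -z := by
    simp only [motzkinT, Matrix.of_apply, Fin.coe_castSucc, Fin.val_last]
    rw [if_neg (Nat.succ_ne_self n)]; simp
  have e2 : motzkinT z (n + 2) (Fin.last (n+1)) (Fin.last (n+1)) = 1 - z := by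
    simp only [motzkinT, Matrix.of_apply, Fin.val_last]
    simp
  rw [e1, e2]
  simp only [Fin.val_last, Fin.coe_castSucc]
  have h1 : ((-1:RatFunc ℚ))^(n+1+n) = -1 := by
    rw [show n+1+n = 2*n+1 by ring, pow_succ, pow_mul]; norm_num
  have h2 : ((-1:RatFunc ℚ))^(n+1+(n+1)) = 1 := by
    rw [show n+1+(n+1) = 2*(n+1) by ring, pow_mul]; norm_num
  rw [h1, h2]
  ring

lemma motzkin_hw : (1 + RatFunc.X + RatFunc.X ^ 2 : RatFunc ℚ) ≠ 0 := by
  rw [← RatFunc.algebraMap_X (K := ℚ), ← map_one (algebraMap (Polynomial ℚ) (RatFunc ℚ)),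
    ← map_pow, ← map_add, ← map_add]
  apply RatFunc.algebraMap_ne_zero
  intro h
  have := congrArg (fun p => Polynomial.coeff p 0) h
  simp at this

lemma motzkin_h2 : (1 - RatFunc.X ^ 2 : RatFunc ℚ) ≠ 0 := by
  rw [← RatFunc.algebraMap_X (K := ℚ), ← map_one (algebraMap (Polynomial ℚ) (RatFunc ℚ)),
    ← map_pow, ← map_sub]
  apply RatFunc.algebraMap_ne_zero
  intro h
  have := congrArg (fun p => Polynomial.coeff p 0) h
  simp at this

lemma motzkin_key' (z : RatFunc ℚ)
    (hz : z = RatFunc.X / (1 + RatFunc.X + RatFunc.X ^ 2)) (n : ℕ) :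
    (motzkinT z n).det * ((1 - RatFunc.X ^ 2) * (1 + RatFunc.X + RatFunc.X ^ 2) ^ n) =
      1 - RatFunc.X ^ (2 * n + 2) := by
  have hw := motzkin_hw
  have hzw : z * (1 + RatFunc.X + RatFunc.X ^ 2) = RatFunc.X := by
    rw [hz, div_mul_cancel₀ _ hw]
  induction n using Nat.twoStepInduction with
  | zero =>
    have h0 : (motzkinT z 0).det = 1 := Matrix.det_fin_zero
    rw [h0]; ring
  | one =>
    have h1 : (motzkinT z 1).det = 1 - z := by
      rw [Matrix.det_fin_one]
      simp [motzkinT]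
    rw [h1]
    linear_combination (-(1 - RatFunc.X ^ 2)) * hzw
  | more m ih1 ih2 =>
    rw [motzkinT_rec]
    linear_combination ((1 - z) * (1 + RatFunc.X + RatFunc.X ^ 2)) * ih2 +
      (-(z ^ 2 * (1 + RatFunc.X + RatFunc.X ^ 2) ^ 2)) * ih1 +
      (-(1 - RatFunc.X ^ (2 * m + 4)) -
        (z * (1 + RatFunc.X + RatFunc.X ^ 2) + RatFunc.X) * (1 - RatFunc.X ^ (2 * m + 2))) * hzw

lemma motzkin_key (z : RatFunc ℚ)
    (hz : z = RatFunc.X / (1 + RatFunc.X + RatFunc.X ^ 2)) (n : ℕ) :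
    (motzkinT z n).det = (1 - RatFunc.X ^ (2 * n + 2)) /
      ((1 - RatFunc.X ^ 2) * (1 + RatFunc.X + RatFunc.X ^ 2) ^ n) := by
  rw [eq_div_iff (mul_ne_zero motzkin_h2 (pow_ne_zero _ motzkin_hw))]
  exact motzkin_key' z hz n

/-- with the substitution `z = v/(1 + v + v²)` in `ℚ(v)`, the determinant
`D_n` of the `n × n` tridiagonal matrix with diagonal entries `1 - z` and entries `-z`
on the subdiagonal and superdiagonal equals `(1 - v^{2n+2})/((1 - v²)(1 + v + v²)^n)`
(with `D_0 = 1`). -/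
theorem motzkin_bounded_height_determinant
    (z : RatFunc ℚ)
    (hz : z = RatFunc.X / (1 + RatFunc.X + RatFunc.X ^ 2))
    (A : (n : ℕ) → Matrix (Fin n) (Fin n) (RatFunc ℚ))
    (hA : ∀ n, A n = Matrix.of fun (i j : Fin n) =>
      if (i : ℕ) = (j : ℕ) then 1 - z
      else if (i : ℕ) + 1 = (j : ℕ) ∨ (j : ℕ) + 1 = (i : ℕ) then -z
      else 0)
    (n : ℕ) :
    (A n).det = (1 - RatFunc.X ^ (2 * n + 2)) /
      ((1 - RatFunc.X ^ 2) * (1 + RatFunc.X + RatFunc.X ^ 2) ^ n) := by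
  have : A n = motzkinT z n := hA n
  rw [this, motzkin_key z hz n]
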